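/- arXiv:1006.1358 — 3 statements merged into one kernel-verified Lean document; each statement's English description precedes it below -/
import Mathlib

section
/- For positive semidefinite matrices A and B, the equality ‖A − B‖₁ = Tr(A) + Tr(B) holds if and only if A and B have orthogonal supports (i.e., AB = 0). -/
/-!
Let `P` be the spectral projection of `A - B` onto its positive eigenspaces. Then
`|A - B| = P (A - B) - (1 - P) (A - B)`, so that
`Tr A + Tr B - ‖A - B‖₁ = 2 Tr ((1 - P) A) + 2 Tr (P B)`, and both traces on the right are traces
of positive semidefinite matrices `(1 - P) A (1 - P)` and `P B P`. Equality therefore forces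
`A (1 - P) = 0` and `B P = 0`, whence `A B = A P B = 0`. Conversely, if `A B = 0` then
`(A - B)² = (A + B)²`, so `|A - B| = A + B`.
-/

open Matrix
open scoped ComplexOrder

/-- The square root of a positive semidefinite matrix, with its meaning in the older Mathlib
(`Matrix.PosSemidef.sqrt`, since removed). -/
noncomputable def Matrix.PosSemidef.sqrt {𝕜 : Type*} [RCLike 𝕜] {m : Type*} [Fintype m]
    [DecidableEq m] {A : Matrix m m 𝕜} (hA : A.PosSemidef) : Matrix m m 𝕜 :=
  (hA.1.eigenvectorUnitary : Matrix m m 𝕜) * diagonal ((↑) ∘ (√·) ∘ hA.1.eigenvalues) *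
    (star (hA.1.eigenvectorUnitary : Matrix m m 𝕜))

/-- The trace norm `‖A‖₁ = Tr √(Aᴴ A)` of a complex matrix. -/
noncomputable def traceNorm {n : ℕ} (A : Matrix (Fin n) (Fin n) ℂ) : ℝ :=
  ((Matrix.posSemidef_conjTranspose_mul_self A).sqrt.trace).re

namespace CFC

variable {A : Type*} [NonUnitalRing A] [StarRing A] [TopologicalSpace A]
  [Module ℝ A] [SMulCommClass ℝ A A] [IsScalarTower ℝ A A]
  [NonUnitalContinuousFunctionalCalculus ℝ A IsSelfAdjoint]
  [PartialOrder A] [StarOrderedRing A] [NonnegSpectrumClass ℝ A]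
  [IsTopologicalRing A] [T2Space A]

lemma abs_sub_of_mul_eq_zero {a b : A} (ha : 0 ≤ a) (hb : 0 ≤ b) (hab : a * b = 0) :
    abs (a - b) = a + b := by
  have ha' := (IsSelfAdjoint.of_nonneg ha).star_eq
  have hb' := (IsSelfAdjoint.of_nonneg hb).star_eq
  have hba : b * a = 0 := by rw [← ha', ← hb', ← star_mul, hab, star_zero]
  have hsq : star (a - b) * (a - b) = star (a + b) * (a + b) := by
    simp only [star_sub, star_add, ha', hb', mul_sub, sub_mul, mul_add, add_mul, hab, hba]
    abel
  rw [abs, hsq, ← abs, abs_of_nonneg _ (add_nonneg ha hb)]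

end CFC

namespace Matrix

lemma trace_mul_star_mul_self_of_isStarProjection {R m : Type*} [CommSemiring R] [StarRing R]
    [Fintype m] {P D : Matrix m m R} (hP : IsStarProjection P) :
    (P * (star D * D)).trace = ((D * P)ᴴ * (D * P)).trace := by
  have hPh : Pᴴ = P := hP.isSelfAdjoint.star_eq
  calc (P * (star D * D)).trace = (P * (P * (star D * D))).trace := by
        rw [← mul_assoc P P, hP.isIdempotentElem.eq]
    _ = (P * (star D * D) * P).trace := trace_mul_comm _ _
    _ = ((D * P)ᴴ * (D * P)).trace := by
        rw [conjTranspose_mul, hPh, star_eq_conjTranspose]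
        simp only [mul_assoc]

variable {𝕜 m : Type*} [RCLike 𝕜] [Fintype m] [DecidableEq m]

section PosSemidef

open scoped MatrixOrder

lemma PosSemidef.sqrt_eq_cfcSqrt {A : Matrix m m 𝕜} (hA : A.PosSemidef) :
    hA.sqrt = CFC.sqrt A := by
  rw [CFC.sqrt_eq_cfc, cfc_nnreal_eq_real _ A, hA.1.cfc_eq]
  simp only [IsHermitian.cfc, Unitary.conjStarAlgAut_apply, PosSemidef.sqrt]
  congr 3
  funext i
  simp [hA.eigenvalues_nonneg i]

variable {P A : Matrix m m 𝕜}

lemma PosSemidef.re_trace_mul_nonneg (hA : A.PosSemidef) (hP : IsStarProjection P) :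
    0 ≤ RCLike.re (P * A).trace := by
  obtain ⟨D, rfl⟩ := CStarAlgebra.nonneg_iff_eq_star_mul_self.mp hA.nonneg
  rw [trace_mul_star_mul_self_of_isStarProjection hP]
  exact (RCLike.nonneg_iff.mp (posSemidef_conjTranspose_mul_self _).trace_nonneg).1

lemma PosSemidef.mul_eq_zero_of_re_trace_mul_eq_zero (hA : A.PosSemidef)
    (hP : IsStarProjection P) (h : RCLike.re (P * A).trace = 0) : A * P = 0 := by
  obtain ⟨D, rfl⟩ := CStarAlgebra.nonneg_iff_eq_star_mul_self.mp hA.nonneg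
  rw [trace_mul_star_mul_self_of_isStarProjection hP] at h
  have him := (RCLike.nonneg_iff.mp (posSemidef_conjTranspose_mul_self (D * P)).trace_nonneg).2
  have hDP : D * P = 0 :=
    trace_conjTranspose_mul_self_eq_zero_iff.mp (RCLike.ext (by simpa using h) (by simpa using him))
  rw [mul_assoc, hDP, mul_zero]

end PosSemidef

-- The indicator is discontinuous, but a matrix has finite spectrum, so `cfc` does not return junk.
noncomputable def positiveSpectralProjection (M : Matrix m m 𝕜) : Matrix m m 𝕜 :=
  cfc (fun t : ℝ => if 0 < t then 1 else 0) M

lemma isStarProjection_positiveSpectralProjection (M : Matrix m m 𝕜) :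
    IsStarProjection (positiveSpectralProjection M) where
  isSelfAdjoint := cfc_predicate _ M
  isIdempotentElem := by
    rw [IsIdempotentElem, positiveSpectralProjection, ← cfc_mul _ _ M
      (M.finite_real_spectrum.continuousOn _) (M.finite_real_spectrum.continuousOn _)]
    congr! 2 with t
    split_ifs <;> simp

open scoped MatrixOrder in
lemma IsHermitian.cfcAbs_eq_positiveSpectralProjection_mul_sub {M : Matrix m m 𝕜}
    (hM : M.IsHermitian) :
    CFC.abs M = positiveSpectralProjection M * M - (1 - positiveSpectralProjection M) * M := by
  set q : ℝ → ℝ := fun t => if 0 < t then 1 else 0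
  have hc (f : ℝ → ℝ) : ContinuousOn f (spectrum ℝ M) := M.finite_real_spectrum.continuousOn f
  have habs : (‖·‖ : ℝ → ℝ) = fun t => q t * t - (1 - q t) * t := by
    ext t
    by_cases ht : 0 < t
    · simp [q, ht, abs_of_pos ht]
    · simp [q, ht, abs_of_nonpos (not_lt.mp ht)]
  rw [CFC.abs_eq_cfc_norm M hM.isSelfAdjoint, habs, cfc_sub (fun t => q t * t) _ M (hc _) (hc _),
    cfc_mul q _ M (hc _) (hc _), cfc_mul (fun t => 1 - q t) _ M (hc _) (hc _),
    cfc_sub (fun _ => 1) q M (hc _) (hc _), cfc_const_one ℝ M, cfc_id' ℝ M]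
  rfl

end Matrix

section TraceNorm

open scoped MatrixOrder

variable {n : ℕ} {A B : Matrix (Fin n) (Fin n) ℂ}

lemma traceNorm_eq_re_trace_cfcAbs (M : Matrix (Fin n) (Fin n) ℂ) :
    traceNorm M = (CFC.abs M).trace.re := by
  rw [traceNorm, PosSemidef.sqrt_eq_cfcSqrt]
  rfl

lemma traceNorm_sub_eq_re_trace_add_sub (hA : A.IsHermitian) (hB : B.IsHermitian) :
    traceNorm (A - B) = A.trace.re + B.trace.re -
      2 * (((1 - positiveSpectralProjection (A - B)) * A).trace.re +
        (positiveSpectralProjection (A - B) * B).trace.re) := by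
  rw [traceNorm_eq_re_trace_cfcAbs, (hA.sub hB).cfcAbs_eq_positiveSpectralProjection_mul_sub]
  simp only [mul_sub, sub_mul, one_mul, trace_sub, Complex.sub_re]
  ring

lemma traceNorm_sub_of_mul_eq_zero (hA : A.PosSemidef) (hB : B.PosSemidef) (hAB : A * B = 0) :
    traceNorm (A - B) = A.trace.re + B.trace.re := by
  rw [traceNorm_eq_re_trace_cfcAbs, CFC.abs_sub_of_mul_eq_zero hA.nonneg hB.nonneg hAB,
    trace_add, Complex.add_re]

end TraceNorm

/-- For PSD matrices `A`, `B`, `‖A − B‖₁ = Tr A + Tr B` iff `A` and `B` have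
orthogonal supports, i.e. `A * B = 0`. -/
theorem traceNorm_sub_eq_sum_traces_iff_orthogonal {n : ℕ}
    (A B : Matrix (Fin n) (Fin n) ℂ)
    (hA : A.PosSemidef) (hB : B.PosSemidef) :
    traceNorm (A - B) = (A.trace).re + (B.trace).re ↔ A * B = 0 := by
  refine ⟨fun h => ?_, traceNorm_sub_of_mul_eq_zero hA hB⟩
  rw [traceNorm_sub_eq_re_trace_add_sub hA.1 hB.1] at h
  set P := positiveSpectralProjection (A - B)
  have hP : IsStarProjection P := isStarProjection_positiveSpectralProjection _
  have hA0 : 0 ≤ ((1 - P) * A).trace.re := hA.re_trace_mul_nonneg hP.one_sub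
  have hB0 : 0 ≤ (P * B).trace.re := hB.re_trace_mul_nonneg hP
  have hAP : A * (1 - P) = 0 :=
    hA.mul_eq_zero_of_re_trace_mul_eq_zero hP.one_sub (show ((1 - P) * A).trace.re = 0 by linarith)
  have hBP : B * P = 0 :=
    hB.mul_eq_zero_of_re_trace_mul_eq_zero hP (show (P * B).trace.re = 0 by linarith)
  have hPB : P * B = 0 := by
    rw [← hP.isSelfAdjoint.star_eq, ← hB.1.eq, ← star_eq_conjTranspose, ← star_mul, hBP, star_zero]
  have hA_eq : A = A * P := by rwa [mul_sub, mul_one, sub_eq_zero] at hAP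
  rw [hA_eq, mul_assoc, hPB, mul_zero]
end

section
/- Let E be a trace-preserving completely positive map on M_n(ℂ), and let P₀ be the orthogonal projection onto the joint support of all fixed points of E. Then there exists a positive semidefinite fixed point ρ₀ of E whose support equals the range of P₀ (i.e., ρ₀ is full-rank on that subspace). -/
open Matrix
open scoped ComplexOrder

/-- A completely positive map on matrices (Kraus characterization). -/
def CompletelyPositive {n : ℕ}
    (E : Matrix (Fin n) (Fin n) ℂ → Matrix (Fin n) (Fin n) ℂ) : Prop :=
  ∃ (k : ℕ) (K : Fin k → Matrix (Fin n) (Fin n) ℂ),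
    ∀ X, E X = ∑ i, K i * X * (K i)ᴴ

/-- A trace-preserving map on matrices. -/
def TracePreserving {n : ℕ}
    (E : Matrix (Fin n) (Fin n) ℂ → Matrix (Fin n) (Fin n) ℂ) : Prop :=
  ∀ X, (E X).trace = X.trace

/-- The support (column space) of a matrix. -/
noncomputable def matSupp {n : ℕ} (X : Matrix (Fin n) (Fin n) ℂ) :
    Submodule ℂ (Fin n → ℂ) :=
  LinearMap.range X.mulVecLin

/-!
Supports of positive semidefinite matrices grow under addition, and the positive semidefinite
fixed points of `E` are closed under addition, so one of them, `ρ₀`, has a support containing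
the support of every other. Every fixed point is a combination of positive semidefinite fixed
points: it splits into Hermitian fixed points because `E` commutes with `ᴴ`, and the positive
and negative parts `H⁺`, `H⁻` of a Hermitian fixed point `H` are again fixed. For the latter,
`E H⁺ - E H⁻ = H` is a decomposition of `H` into positive semidefinite matrices with
`tr (E H⁺) = tr H⁺`, and the Jordan decomposition is the only such decomposition of minimal
trace.
-/

open scoped MatrixOrder ComplexStarModule

theorem LinearMap.exists_comp_eq_of_ker_le {K V W U : Type*} [DivisionRing K]
    [AddCommGroup V] [Module K V] [AddCommGroup W] [Module K W] [AddCommGroup U] [Module K U]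
    {f : V →ₗ[K] W} {g : V →ₗ[K] U} (h : ker f ≤ ker g) : ∃ φ : W →ₗ[K] U, φ ∘ₗ f = g := by
  obtain ⟨φ, hφ⟩ := exists_extend ((ker f).liftQ g h ∘ₗ f.quotKerEquivRange.symm.toLinearMap)
  refine ⟨φ, ext fun v => ?_⟩
  simpa using congr($hφ ⟨f v, mem_range_self f v⟩)

namespace Matrix

theorem exists_eq_mul_of_ker_le {K m n p : Type*} [Field K] [Fintype n] [DecidableEq n]
    [Fintype p] [DecidableEq p] {A : Matrix m n K} {C : Matrix p n K}
    (h : LinearMap.ker C.mulVecLin ≤ LinearMap.ker A.mulVecLin) :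
    ∃ D : Matrix m p K, A = D * C := by
  obtain ⟨φ, hφ⟩ := LinearMap.exists_comp_eq_of_ker_le h
  refine ⟨LinearMap.toMatrix' φ, toLin'.injective ?_⟩
  rw [toLin'_mul, toLin'_toMatrix', toLin'_apply', toLin'_apply', hφ]

section PosSemidef

variable {ι 𝕜 : Type*} [Fintype ι] [RCLike 𝕜]

theorem PosSemidef.ker_mulVecLin_add_le {A B : Matrix ι ι 𝕜} (hA : A.PosSemidef)
    (hB : B.PosSemidef) : LinearMap.ker (A + B).mulVecLin ≤ LinearMap.ker A.mulVecLin := by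
  intro v hv
  rw [LinearMap.mem_ker, mulVecLin_apply] at hv ⊢
  have hsum : star v ⬝ᵥ A *ᵥ v + star v ⬝ᵥ B *ᵥ v = 0 := by
    rw [← dotProduct_add, ← add_mulVec, hv, dotProduct_zero]
  exact (hA.dotProduct_mulVec_zero_iff v).mp ((add_eq_zero_iff_of_nonneg
    (hA.dotProduct_mulVec_nonneg v) (hB.dotProduct_mulVec_nonneg v)).mp hsum).1

theorem trace_mul_isStarProjection {M R : Matrix ι ι 𝕜} (hR : IsStarProjection R) :
    (M * R).trace = (Rᴴ * M * R).trace := by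
  rw [trace_mul_cycle, ← star_eq_conjTranspose, hR.isSelfAdjoint.star_eq,
    hR.isIdempotentElem.eq, trace_mul_comm]

theorem PosSemidef.trace_mul_nonneg {M R : Matrix ι ι 𝕜} (hM : M.PosSemidef)
    (hR : IsStarProjection R) : 0 ≤ (M * R).trace := by
  rw [trace_mul_isStarProjection hR]
  exact (hM.conjTranspose_mul_mul_same R).trace_nonneg

variable [DecidableEq ι]

theorem PosSemidef.mul_eq_zero_of_trace_mul_eq_zero {M R : Matrix ι ι 𝕜} (hM : M.PosSemidef)
    (hR : IsStarProjection R) (h : (M * R).trace = 0) : M * R = 0 := by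
  obtain ⟨B, rfl⟩ := CStarAlgebra.nonneg_iff_eq_star_mul_self.mp hM.nonneg
  rw [trace_mul_isStarProjection hR, star_eq_conjTranspose,
    show Rᴴ * (Bᴴ * B) * R = (B * R)ᴴ * (B * R) by simp [conjTranspose_mul, mul_assoc],
    trace_conjTranspose_mul_self_eq_zero_iff] at h
  rw [mul_assoc, h, mul_zero]

theorem exists_isStarProjection_posPart_mul (H : Matrix ι ι 𝕜) :
    ∃ Q : Matrix ι ι 𝕜, IsStarProjection Q ∧ H⁺ * Q = H⁺ ∧ H⁻ * Q = 0 := by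
  have hcont (f : ℝ → ℝ) : ContinuousOn f (spectrum ℝ H) := H.finite_real_spectrum.continuousOn f
  set χ : ℝ → ℝ := fun x => if 0 < x then 1 else 0
  have hmul (f : ℝ → ℝ) (hf : Continuous f) (hf0 : f 0 = 0) :
      cfcₙ f H * cfc χ H = cfc (fun x => f x * χ x) H := by
    rw [cfcₙ_eq_cfc, ← cfc_mul f χ H (hcont f) (hcont χ)]
  refine ⟨cfc χ H, ⟨?_, cfc_predicate _ _⟩, ?_, ?_⟩
  · rw [IsIdempotentElem, ← cfc_mul χ χ H (hcont χ) (hcont χ)]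
    exact cfc_congr fun x _ => by simp only [χ]; split_ifs <;> simp
  · rw [CFC.posPart_def, hmul _ continuous_posPart (by simp), cfcₙ_eq_cfc]
    refine cfc_congr fun x _ => ?_
    simp only [χ]; split_ifs with h
    · simp
    · simp [posPart_eq_zero.mpr (not_lt.mp h)]
  · rw [CFC.negPart_def, hmul _ continuous_negPart (by simp), ← cfc_zero ℝ H]
    refine cfc_congr fun x _ => ?_
    simp only [χ]; split_ifs with h
    · simp [negPart_eq_zero.mpr h.le]
    · simp

theorem PosSemidef.eq_posPart_of_sub_eq {A B H : Matrix ι ι 𝕜} (hA : A.PosSemidef)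
    (hB : B.PosSemidef) (hH : H.IsHermitian) (hAB : A - B = H) (htr : A.trace = (H⁺).trace) :
    A = H⁺ := by
  obtain ⟨Q, hQ, hPQ, hNQ⟩ := exists_isStarProjection_posPart_mul H
  have hA_eq : A = H⁺ - H⁻ + B := by rw [CFC.posPart_sub_negPart H hH, ← hAB]; abel
  have hAQ : A * Q = H⁺ + B * Q := by rw [hA_eq, add_mul, sub_mul, hPQ, hNQ, sub_zero]
  have htr_zero : (A * (1 - Q)).trace + (B * Q).trace = 0 := by
    rw [mul_sub, mul_one, trace_sub, hAQ, trace_add, htr]; ring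
  obtain ⟨hA₀, hB₀⟩ := (add_eq_zero_iff_of_nonneg (hA.trace_mul_nonneg hQ.one_sub)
    (hB.trace_mul_nonneg hQ)).mp htr_zero
  calc A = A * Q := by
        simpa [mul_sub, sub_eq_zero] using hA.mul_eq_zero_of_trace_mul_eq_zero hQ.one_sub hA₀
    _ = H⁺ := by rw [hAQ, hB.mul_eq_zero_of_trace_mul_eq_zero hQ hB₀, add_zero]

theorem map_posPart_eq_of_map_eq {E : Module.End 𝕜 (Matrix ι ι 𝕜)}
    (hpos : ∀ X, X.PosSemidef → (E X).PosSemidef) (htr : ∀ X, (E X).trace = X.trace)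
    {H : Matrix ι ι 𝕜} (hH : H.IsHermitian) (hfix : E H = H) : E H⁺ = H⁺ :=
  (hpos _ (CFC.posPart_nonneg H).posSemidef).eq_posPart_of_sub_eq
    (hpos _ (CFC.negPart_nonneg H).posSemidef) hH
    (by rw [← map_sub, CFC.posPart_sub_negPart H hH, hfix]) (htr _)

end PosSemidef

variable {n : ℕ}

theorem IsHermitian.matSupp_le_of_ker_le {A C : Matrix (Fin n) (Fin n) ℂ} (hA : A.IsHermitian)
    (hC : C.IsHermitian) (h : LinearMap.ker C.mulVecLin ≤ LinearMap.ker A.mulVecLin) :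
    matSupp A ≤ matSupp C := by
  obtain ⟨D, hD⟩ := exists_eq_mul_of_ker_le h
  have hA_eq : A = C * Dᴴ := by rw [← hA.eq, hD, conjTranspose_mul, hC.eq]
  rw [matSupp, matSupp, hA_eq, mulVecLin_mul]
  exact LinearMap.range_comp_le_range _ _

theorem PosSemidef.matSupp_le_add {A B : Matrix (Fin n) (Fin n) ℂ} (hA : A.PosSemidef)
    (hB : B.PosSemidef) : matSupp A ≤ matSupp (A + B) :=
  hA.isHermitian.matSupp_le_of_ker_le (hA.add hB).isHermitian (hA.ker_mulVecLin_add_le hB)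

end Matrix

variable {n : ℕ}

theorem matSupp_add_le (A B : Matrix (Fin n) (Fin n) ℂ) :
    matSupp (A + B) ≤ matSupp A ⊔ matSupp B := by
  simpa only [matSupp, mulVecLin_add] using LinearMap.range_add_le _ _

theorem matSupp_smul_le (c : ℂ) (A : Matrix (Fin n) (Fin n) ℂ) :
    matSupp (c • A) ≤ matSupp A := by
  rw [matSupp, matSupp, ← toLin'_apply', ← toLin'_apply', map_smul]
  exact LinearMap.range_smul_le_range _ _

theorem matSupp_sub_le (A B : Matrix (Fin n) (Fin n) ℂ) :
    matSupp (A - B) ≤ matSupp A ⊔ matSupp B := by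
  simpa only [sub_eq_add_neg, ← neg_one_smul ℂ B] using
    (matSupp_add_le A _).trans (sup_le_sup_left (matSupp_smul_le _ B) _)

theorem exists_matSupp_le_of_add_mem {S : Set (Matrix (Fin n) (Fin n) ℂ)} (hne : S.Nonempty)
    (hpsd : ∀ σ ∈ S, σ.PosSemidef) (hadd : ∀ ρ ∈ S, ∀ σ ∈ S, ρ + σ ∈ S) :
    ∃ ρ₀ ∈ S, ∀ σ ∈ S, matSupp σ ≤ matSupp ρ₀ := by
  obtain ⟨_, ⟨ρ₀, hρ₀, rfl⟩, hmax⟩ := wellFounded_gt.has_min (matSupp '' S) (hne.image _)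
  refine ⟨ρ₀, hρ₀, fun σ hσ => ?_⟩
  have heq : matSupp ρ₀ = matSupp (ρ₀ + σ) :=
    ((hpsd ρ₀ hρ₀).matSupp_le_add (hpsd σ hσ)).eq_of_not_lt (hmax _ ⟨_, hadd _ hρ₀ _ hσ, rfl⟩)
  rw [heq, add_comm]
  exact (hpsd σ hσ).matSupp_le_add (hpsd ρ₀ hρ₀)

theorem CompletelyPositive.map_conjTranspose
    {E : Matrix (Fin n) (Fin n) ℂ → Matrix (Fin n) (Fin n) ℂ} (hE : CompletelyPositive E)
    (X : Matrix (Fin n) (Fin n) ℂ) : E Xᴴ = (E X)ᴴ := by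
  obtain ⟨k, K, hK⟩ := hE
  simp [hK, conjTranspose_sum, conjTranspose_mul, mul_assoc]

theorem CompletelyPositive.posSemidef_apply
    {E : Matrix (Fin n) (Fin n) ℂ → Matrix (Fin n) (Fin n) ℂ} (hE : CompletelyPositive E)
    {X : Matrix (Fin n) (Fin n) ℂ} (hX : X.PosSemidef) : (E X).PosSemidef := by
  obtain ⟨k, K, hK⟩ := hE
  rw [hK]
  exact posSemidef_sum _ fun i _ => hX.mul_mul_conjTranspose_same (K i)

section FixedPoints

variable {E : Module.End ℂ (Matrix (Fin n) (Fin n) ℂ)} {V : Submodule ℂ (Fin n → ℂ)}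

theorem Matrix.IsHermitian.matSupp_le_of_map_eq
    (hpos : ∀ X, X.PosSemidef → (E X).PosSemidef) (htr : ∀ X, (E X).trace = X.trace)
    (hV : ∀ σ, σ.PosSemidef → E σ = σ → matSupp σ ≤ V)
    {H : Matrix (Fin n) (Fin n) ℂ} (hH : H.IsHermitian) (hfix : E H = H) : matSupp H ≤ V := by
  have hH_eq := CFC.posPart_sub_negPart H hH
  have hP : E H⁺ = H⁺ := map_posPart_eq_of_map_eq hpos htr hH hfix
  have hN : E H⁻ = H⁻ := by
    rw [← sub_sub_cancel H⁺ H⁻, hH_eq, map_sub, hP, hfix]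
  rw [← hH_eq]
  exact (matSupp_sub_le _ _).trans (sup_le
    (hV _ (CFC.posPart_nonneg H).posSemidef hP) (hV _ (CFC.negPart_nonneg H).posSemidef hN))

theorem matSupp_le_of_map_eq
    (hpos : ∀ X, X.PosSemidef → (E X).PosSemidef) (htr : ∀ X, (E X).trace = X.trace)
    (hstar : ∀ X, E Xᴴ = (E X)ᴴ) (hV : ∀ σ, σ.PosSemidef → E σ = σ → matSupp σ ≤ V)
    {X : Matrix (Fin n) (Fin n) ℂ} (hfix : E X = X) : matSupp X ≤ V := by
  have hstar_fix : E (star X) = star X := by rw [star_eq_conjTranspose, hstar, hfix]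
  have hre : E (ℜ X) = ℜ X := by
    rw [realPart_apply_coe, LinearMap.map_smul_of_tower, map_add, hfix, hstar_fix]
  have him : E (ℑ X) = ℑ X := by
    rw [imaginaryPart_apply_coe, map_smul, LinearMap.map_smul_of_tower, map_sub, hfix, hstar_fix]
  rw [← realPart_add_I_smul_imaginaryPart X]
  exact (matSupp_add_le _ _).trans (sup_le
    (IsHermitian.matSupp_le_of_map_eq hpos htr hV (ℜ X).2 hre)
    ((matSupp_smul_le _ _).trans (IsHermitian.matSupp_le_of_map_eq hpos htr hV (ℑ X).2 him)))

end FixedPoints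

/-- A CPTP map `E` has a PSD fixed point `ρ₀` whose support is exactly the
joint support of all fixed points of `E`. -/
theorem exists_full_rank_fixed_state {n : ℕ}
    (E : Module.End ℂ (Matrix (Fin n) (Fin n) ℂ))
    (hCP : CompletelyPositive (⇑E)) (hTP : TracePreserving (⇑E)) :
    ∃ ρ₀ : Matrix (Fin n) (Fin n) ℂ,
      ρ₀.PosSemidef ∧ E ρ₀ = ρ₀ ∧
      matSupp ρ₀ = ⨆ X ∈ {X : Matrix (Fin n) (Fin n) ℂ | E X = X}, matSupp X := by
  obtain ⟨ρ₀, ⟨hρ₀, hfix⟩, hmax⟩ := exists_matSupp_le_of_add_mem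
    (S := {σ | σ.PosSemidef ∧ E σ = σ}) ⟨0, .zero, map_zero E⟩ (fun _ hσ => hσ.1)
    (fun _ hρ _ hσ => ⟨hρ.1.add hσ.1, by rw [map_add, hρ.2, hσ.2]⟩)
  refine ⟨ρ₀, hρ₀, hfix, le_antisymm (le_iSup₂_of_le ρ₀ hfix le_rfl) (iSup₂_le fun X hX => ?_)⟩
  exact matSupp_le_of_map_eq (fun _ => hCP.posSemidef_apply) hTP hCP.map_conjTranspose
    (fun σ hσ hσfix => hmax σ ⟨hσ, hσfix⟩) hX
end

section
/- Let E be a trace-preserving completely positive map on M_n(ℂ) and λ an eigenvalue of E with |λ| = 1. Then the Jordan blocks of E (as a linear operator on M_n(ℂ)) associated with λ all have size 1; equivalently, ker(E − λI)² = ker(E − λI). -/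
open Matrix
open scoped ComplexOrder

/-!
If `(f - μ)² v = 0` and `w = (f - μ) v`, then `fᵐ v = μᵐ v + m μᵐ⁻¹ w`; for `|μ| = 1` the second
term grows linearly in `m`, so a bounded orbit forces `w = 0`. The orbits of a CPTP map `E` are
bounded: every matrix is a combination of four positive semidefinite ones, and `Eᵐ` maps a positive
semidefinite `P` to a positive semidefinite matrix of the same trace, whose operator norm (its
largest eigenvalue) is at most that trace.
-/

namespace Module.End

section CommRing

variable {R V : Type*} [CommRing R] [AddCommGroup V] [Module R V]

theorem smul_pow_apply_of_mem_ker_sub_smul_sq {f : Module.End R V} {μ : R} {v : V}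
    (hv : v ∈ LinearMap.ker ((f - μ • 1) ^ 2)) (m : ℕ) :
    μ • (f ^ m) v = μ ^ (m + 1) • v + ((m : R) * μ ^ m) • (f - μ • 1) v := by
  have hfv : f v = μ • v + (f - μ • 1) v := by simp
  have hfw : f ((f - μ • 1) v) = μ • (f - μ • 1) v := by
    simpa [sq, sub_eq_zero] using hv
  induction m with
  | zero => simp [pow_succ]
  | succ m ih =>
    rw [pow_succ', mul_apply, ← map_smul, ih, map_add, map_smul, map_smul, hfv, hfw]
    push_cast
    module

end CommRing

variable {𝕜 V : Type*} [RCLike 𝕜] [NormedAddCommGroup V] [NormedSpace 𝕜 V]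

theorem mem_ker_sub_smul_of_mem_ker_sq_of_bddAbove {f : Module.End 𝕜 V} {μ : 𝕜}
    (hμ : ‖μ‖ = 1) {v : V} (hv : v ∈ LinearMap.ker ((f - μ • 1) ^ 2))
    (hbdd : BddAbove (Set.range fun m : ℕ => ‖(f ^ m) v‖)) :
    v ∈ LinearMap.ker (f - μ • 1) := by
  rw [LinearMap.mem_ker]
  obtain ⟨C, hC⟩ := hbdd
  set w := (f - μ • 1) v
  have hlinear (m : ℕ) : m * ‖w‖ ≤ C + ‖v‖ := calc
    m * ‖w‖ = ‖μ • (f ^ m) v - μ ^ (m + 1) • v‖ := by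
      rw [smul_pow_apply_of_mem_ker_sub_smul_sq hv, add_sub_cancel_left, norm_smul,
        norm_mul, norm_pow, hμ, one_pow, mul_one, RCLike.norm_natCast]
    _ ≤ ‖(f ^ m) v‖ + ‖v‖ := by
      simpa [norm_smul, hμ] using norm_sub_le (μ • (f ^ m) v) (μ ^ (m + 1) • v)
    _ ≤ C + ‖v‖ := by gcongr; exact hC ⟨m, rfl⟩
  by_contra hw
  obtain ⟨m, hm⟩ := exists_nat_gt ((C + ‖v‖) / ‖w‖)
  rw [div_lt_iff₀ (norm_pos_iff.mpr hw)] at hm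
  exact (hlinear m).not_gt hm

theorem ker_sub_smul_sq_eq_ker_of_bddAbove {f : Module.End 𝕜 V} {μ : 𝕜} (hμ : ‖μ‖ = 1)
    (hbdd : ∀ v, BddAbove (Set.range fun m : ℕ => ‖(f ^ m) v‖)) :
    LinearMap.ker ((f - μ • 1) ^ 2) = LinearMap.ker (f - μ • 1) := by
  refine le_antisymm (fun v hv => mem_ker_sub_smul_of_mem_ker_sq_of_bddAbove hμ hv (hbdd v)) ?_
  rw [sq, mul_eq_comp]
  exact LinearMap.ker_le_ker_comp _ _

end Module.End

namespace CompletelyPositive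

variable {n : ℕ}

theorem posSemidef_apply_s10 {E : Matrix (Fin n) (Fin n) ℂ → Matrix (Fin n) (Fin n) ℂ}
    (hE : CompletelyPositive E) {P : Matrix (Fin n) (Fin n) ℂ} (hP : P.PosSemidef) :
    (E P).PosSemidef := by
  obtain ⟨k, K, hK⟩ := hE
  rw [hK]
  exact posSemidef_sum _ fun i _ => hP.mul_mul_conjTranspose_same (K i)

theorem posSemidef_pow_apply {E : Module.End ℂ (Matrix (Fin n) (Fin n) ℂ)}
    (hE : CompletelyPositive E) (m : ℕ) {P : Matrix (Fin n) (Fin n) ℂ} (hP : P.PosSemidef) :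
    ((E ^ m) P).PosSemidef := by
  rw [Module.End.coe_pow]
  exact Function.Iterate.rec _ hP (fun _ => hE.posSemidef_apply_s10) m

end CompletelyPositive

theorem TracePreserving.trace_pow_apply {n : ℕ} {E : Module.End ℂ (Matrix (Fin n) (Fin n) ℂ)}
    (hE : TracePreserving E) (m : ℕ) (X : Matrix (Fin n) (Fin n) ℂ) :
    ((E ^ m) X).trace = X.trace := by
  rw [Module.End.coe_pow]
  exact Function.Iterate.rec (fun Y => Y.trace = X.trace) rfl (fun Y hY => (hE Y).trans hY) m

section L2OpNorm

open scoped Matrix.Norms.L2Operator MatrixOrder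

theorem Matrix.PosSemidef.l2_opNorm_le_re_trace {ι : Type*} [Fintype ι] [DecidableEq ι]
    {P : Matrix ι ι ℂ} (hP : P.PosSemidef) : ‖P‖ ≤ P.trace.re := by
  cases isEmpty_or_nonempty ι
  · simp [Subsingleton.elim P 0]
  obtain ⟨i, hi⟩ : ‖P‖ ∈ Set.range hP.isHermitian.eigenvalues := by
    rw [← hP.isHermitian.spectrum_real_eq_range_eigenvalues]
    exact CStarAlgebra.norm_mem_spectrum_of_nonneg (nonneg_iff_posSemidef.mpr hP)
  rw [← hi, hP.isHermitian.trace_eq_sum_eigenvalues]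
  simpa using Finset.single_le_sum (fun j _ => hP.eigenvalues_nonneg j) (Finset.mem_univ i)

theorem CompletelyPositive.bddAbove_norm_pow_apply {n : ℕ}
    {E : Module.End ℂ (Matrix (Fin n) (Fin n) ℂ)} (hCP : CompletelyPositive E)
    (hTP : TracePreserving E) (X : Matrix (Fin n) (Fin n) ℂ) :
    BddAbove (Set.range fun m : ℕ => ‖(E ^ m) X‖) := by
  obtain ⟨P, hP, -, rfl⟩ := CStarAlgebra.exists_sum_four_nonneg X
  refine ⟨∑ i, (P i).trace.re, Set.forall_mem_range.mpr fun m => ?_⟩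
  rw [map_sum]
  refine (norm_sum_le _ _).trans (Finset.sum_le_sum fun i _ => ?_)
  calc ‖(E ^ m) (Complex.I ^ (i : ℕ) • P i)‖ = ‖(E ^ m) (P i)‖ := by simp [norm_smul]
    _ ≤ ((E ^ m) (P i)).trace.re :=
      (hCP.posSemidef_pow_apply m (nonneg_iff_posSemidef.mp (hP i))).l2_opNorm_le_re_trace
    _ = (P i).trace.re := by rw [hTP.trace_pow_apply]

end L2OpNorm

theorem peripheral_spectrum_no_jordan_blocks_general {n : ℕ}
    (E : Module.End ℂ (Matrix (Fin n) (Fin n) ℂ))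
    (hCP : CompletelyPositive (⇑E)) (hTP : TracePreserving (⇑E))
    (lam : ℂ) (hlam : ‖lam‖ = 1) :
    LinearMap.ker ((E - lam • (1 : Module.End ℂ (Matrix (Fin n) (Fin n) ℂ))) ^ 2) =
      LinearMap.ker (E - lam • (1 : Module.End ℂ (Matrix (Fin n) (Fin n) ℂ))) := by
  open scoped Matrix.Norms.L2Operator in
  exact Module.End.ker_sub_smul_sq_eq_ker_of_bddAbove hlam (hCP.bddAbove_norm_pow_apply hTP)

/-- For a CPTP map `E`, Jordan blocks associated with a unimodular eigenvalue
`λ` are all of size 1: `ker (E − λ·1)² = ker (E − λ·1)`. -/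
theorem peripheral_spectrum_no_jordan_blocks {n : ℕ}
    (E : Module.End ℂ (Matrix (Fin n) (Fin n) ℂ))
    (hCP : CompletelyPositive (⇑E)) (hTP : TracePreserving (⇑E))
    (lam : ℂ) (hEig : Module.End.HasEigenvalue E lam) (hlam : ‖lam‖ = 1) :
    LinearMap.ker ((E - lam • (1 : Module.End ℂ (Matrix (Fin n) (Fin n) ℂ))) ^ 2) =
      LinearMap.ker (E - lam • (1 : Module.End ℂ (Matrix (Fin n) (Fin n) ℂ))) :=
  peripheral_spectrum_no_jordan_blocks_general E hCP hTP lam hlam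
end
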